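/- arXiv:2105.13883 — 2 statements merged into one kernel-verified Lean document; each statement's English description precedes it below -/
import Mathlib

section
/- Let P_1,…,P_s ∈ ℤ[x] (s ≥ 2) be nonzero coprime one-variable polynomials, and set d_n = gcd(P_1(n),…,P_s(n)) for n ∈ ℤ. Then the set 𝒟 = {d_n : n ∈ ℤ} is a finite set, stable under gcd and under lcm: for all n, m ∈ ℤ there exist n', n'' ∈ ℤ with gcd(d_n, d_m) = d_{n'} and lcm(d_n, d_m) = d_{n''}. -/
/-!
Over `ℚ` the `P i` generate the unit ideal, so clearing denominators gives a nonzero integer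
`N` in the ideal they generate in `ℤ[X]`; hence every `d n` divides `N`. Moreover the part of
`d n` at a prime `p` only depends on `n` modulo `p ^ v_p(N)`. By the Chinese remainder theorem
one can therefore choose `n'` agreeing with `n` at some primes of `N` and with `m` at the others,
and so realise both `gcd (d n) (d m)` and `lcm (d n) (d m)` as values of `d`.
-/

open Polynomial

theorem Polynomial.span_range_eq_top_of_forall_dvd_natDegree_eq_zero {K ι : Type*} [Field K]
    (Q : ι → K[X]) (hQ : ∀ D : K[X], (∀ i, D ∣ Q i) → D.natDegree = 0) :
    Ideal.span (Set.range Q) = ⊤ := by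
  set g := Submodule.IsPrincipal.generator (Ideal.span (Set.range Q))
  have hg : ∀ i, g ∣ Q i := fun i =>
    (Submodule.IsPrincipal.mem_iff_generator_dvd _).1 (Ideal.subset_span ⟨i, rfl⟩)
  have hg0 : g ≠ 0 := by
    intro h
    have hX := hQ X fun i => by simp [(zero_dvd_iff.1 (h ▸ hg i))]
    simp at hX
  have hunit : IsUnit g :=
    isUnit_iff_degree_eq_zero.2 ((degree_eq_iff_natDegree_eq hg0).2 (hQ g hg))
  rw [← Submodule.IsPrincipal.span_singleton_generator (Ideal.span (Set.range Q)),
    Ideal.submodule_span_eq, Ideal.span_singleton_eq_top]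
  exact hunit

theorem Polynomial.exists_C_mem_span_of_span_map_eq_top {ι : Type*} (P : ι → ℤ[X])
    (hP : Ideal.span (Set.range fun i => (P i).map (Int.castRingHom ℚ)) = ⊤) :
    ∃ N : ℤ, N ≠ 0 ∧ C N ∈ Ideal.span (Set.range P) := by
  let := Polynomial.algebra ℤ ℚ
  have : IsLocalization ((nonZeroDivisors ℤ).map C) ℚ[X] := Polynomial.isLocalization _ _
  have hmap : algebraMap ℤ[X] ℚ[X] = mapRingHom (Int.castRingHom ℚ) := by ext <;> simp
  have h1 : (1 : ℚ[X]) ∈ (Ideal.span (Set.range P)).map (algebraMap ℤ[X] ℚ[X]) := by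
    rw [Ideal.map_span, ← Set.range_comp, hmap]
    exact hP ▸ Submodule.mem_top
  obtain ⟨⟨⟨x, hx⟩, ⟨_, N, hN, rfl⟩⟩, h⟩ :=
    (IsLocalization.mem_map_algebraMap_iff ((nonZeroDivisors ℤ).map C) ℚ[X]).1 h1
  refine ⟨N, nonZeroDivisors.ne_zero hN, ?_⟩
  convert hx
  apply map_injective _ (RingHom.injective_int (Int.castRingHom ℚ))
  simpa [hmap] using h

theorem Polynomial.gcd_eval_dvd_eval_of_mem_span {R ι : Type*} [CommRing R] [IsDomain R]
    [NormalizedGCDMonoid R] [Fintype ι] (P : ι → R[X]) (a : R) {x : R[X]}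
    (hx : x ∈ Ideal.span (Set.range P)) : Finset.univ.gcd (fun i => (P i).eval a) ∣ x.eval a := by
  have hle : Ideal.span (Set.range P) ≤
      (Ideal.span {Finset.univ.gcd fun i => (P i).eval a}).comap (evalRingHom a) := by
    rw [Ideal.span_le]
    rintro _ ⟨i, rfl⟩
    simpa [Ideal.mem_span_singleton] using Finset.gcd_dvd (Finset.mem_univ i)
  simpa [Ideal.mem_span_singleton] using hle hx

theorem Polynomial.dvd_gcd_eval_of_dvd_sub {R ι : Type*} [CommRing R] [IsDomain R]
    [NormalizedGCDMonoid R] [Fintype ι] (P : ι → R[X]) {k a a' : R} (h : k ∣ a' - a)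
    (hk : k ∣ Finset.univ.gcd fun i => (P i).eval a) :
    k ∣ Finset.univ.gcd fun i => (P i).eval a' :=
  Finset.dvd_gcd fun i _ => by
    simpa using (h.trans (sub_dvd_eval_sub a' a (P i))).add
      (hk.trans (Finset.gcd_dvd (Finset.mem_univ i)))

theorem IsCoprime.exists_dvd_sub_and_dvd_sub {R : Type*} [CommRing R] {a b : R}
    (h : IsCoprime a b) (x y : R) : ∃ z, a ∣ z - x ∧ b ∣ z - y := by
  obtain ⟨u, v, huv⟩ := h
  exact ⟨x * (v * b) + y * (u * a), ⟨(y - x) * u, by linear_combination x * huv⟩,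
    ⟨(x - y) * v, by linear_combination y * huv⟩⟩

theorem Nat.exists_ordProj_dvd_sub_ite (N : ℕ) (c : ℕ → Prop) [DecidablePred c] (x y : ℤ) :
    ∃ z : ℤ, ∀ p, (ordProj[p] N : ℤ) ∣ z - if c p then x else y := by
  set a := ∏ p ∈ N.primeFactors with c p, ordProj[p] N
  set b := ∏ p ∈ N.primeFactors with ¬c p, ordProj[p] N
  have hab : Nat.Coprime a b :=
    Nat.Coprime.prod_left fun p hp => Nat.Coprime.prod_right fun q hq =>
      Nat.coprime_pow_primes _ _ (prime_of_mem_primeFactors (Finset.mem_filter.1 hp).1)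
        (prime_of_mem_primeFactors (Finset.mem_filter.1 hq).1)
        fun hpq => (Finset.mem_filter.1 hq).2 (hpq ▸ (Finset.mem_filter.1 hp).2)
  obtain ⟨z, hza, hzb⟩ := (Nat.isCoprime_iff_coprime.2 hab).exists_dvd_sub_and_dvd_sub x y
  refine ⟨z, fun p => ?_⟩
  by_cases hpN : p ∈ N.primeFactors
  · split_ifs with hc
    · exact (Int.natCast_dvd_natCast.2 (Finset.dvd_prod_of_mem _
        (Finset.mem_filter.2 ⟨hpN, hc⟩))).trans hza
    · exact (Int.natCast_dvd_natCast.2 (Finset.dvd_prod_of_mem _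
        (Finset.mem_filter.2 ⟨hpN, hc⟩))).trans hzb
  · simp [Finsupp.notMem_support_iff.1 (Nat.support_factorization N ▸ hpN)]

structure IsLocallyDetermined (g : ℤ → ℕ) (N : ℕ) : Prop where
  ne_zero : N ≠ 0
  dvd : ∀ n, g n ∣ N
  dvd_of_dvd_sub : ∀ (k : ℕ) (n n' : ℤ), (k : ℤ) ∣ n' - n → k ∣ g n → k ∣ g n'

namespace IsLocallyDetermined

variable {g : ℤ → ℕ} {N : ℕ}

theorem apply_ne_zero (hg : IsLocallyDetermined g N) (n : ℤ) : g n ≠ 0 :=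
  ne_zero_of_dvd_ne_zero hg.ne_zero (hg.dvd n)

theorem factorization_le (hg : IsLocallyDetermined g N) {p : ℕ} (hp : p.Prime) {n n' : ℤ}
    (h : (ordProj[p] N : ℤ) ∣ n' - n) : (g n).factorization p ≤ (g n').factorization p := by
  have hle : (g n).factorization p ≤ N.factorization p :=
    (Nat.factorization_le_iff_dvd (hg.apply_ne_zero n) hg.ne_zero).2 (hg.dvd n) p
  have hpow : p ^ (g n).factorization p ∣ g n' :=
    hg.dvd_of_dvd_sub _ n n' ((Int.natCast_dvd_natCast.2 (Nat.pow_dvd_pow p hle)).trans h)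
      (Nat.ordProj_dvd _ _)
  exact (hp.pow_dvd_iff_le_factorization (hg.apply_ne_zero n')).1 hpow

theorem factorization_eq (hg : IsLocallyDetermined g N) {p : ℕ} (hp : p.Prime) {n n' : ℤ}
    (h : (ordProj[p] N : ℤ) ∣ n' - n) : (g n').factorization p = (g n).factorization p :=
  le_antisymm (hg.factorization_le hp (dvd_sub_comm.1 h)) (hg.factorization_le hp h)

theorem exists_factorization_eq_ite (hg : IsLocallyDetermined g N) (c : ℕ → Prop)
    [DecidablePred c] (n m : ℤ) :
    ∃ n', ∀ p, (g n').factorization p =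
      if c p then (g n).factorization p else (g m).factorization p := by
  obtain ⟨n', hn'⟩ := Nat.exists_ordProj_dvd_sub_ite N c n m
  refine ⟨n', fun p => ?_⟩
  by_cases hp : p.Prime
  · have := hn' p
    split_ifs at this ⊢ <;> exact hg.factorization_eq hp this
  · simp [Nat.factorization_eq_zero_of_not_prime _ hp]

theorem exists_eq_gcd (hg : IsLocallyDetermined g N) (n m : ℤ) :
    ∃ n', g n' = Nat.gcd (g n) (g m) := by
  have h0 := hg.apply_ne_zero
  obtain ⟨n', hn'⟩ := hg.exists_factorization_eq_ite
    (fun p => (g n).factorization p ≤ (g m).factorization p) n m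
  refine ⟨n', Nat.eq_of_factorization_eq (h0 n') (Nat.gcd_ne_zero_left (h0 n)) fun p => ?_⟩
  rw [hn', Nat.factorization_gcd (h0 n) (h0 m), Finsupp.inf_apply]
  split_ifs <;> omega

theorem exists_eq_lcm (hg : IsLocallyDetermined g N) (n m : ℤ) :
    ∃ n', g n' = Nat.lcm (g n) (g m) := by
  have h0 := hg.apply_ne_zero
  obtain ⟨n', hn'⟩ := hg.exists_factorization_eq_ite
    (fun p => (g m).factorization p ≤ (g n).factorization p) n m
  refine ⟨n', Nat.eq_of_factorization_eq (h0 n') (Nat.lcm_ne_zero (h0 n) (h0 m)) fun p => ?_⟩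
  rw [hn', Nat.factorization_lcm (h0 n) (h0 m), Finsupp.sup_apply]
  split_ifs <;> omega

theorem finite_range (hg : IsLocallyDetermined g N) : (Set.range g).Finite :=
  N.divisors.finite_toSet.subset <| Set.range_subset_iff.2 fun n =>
    Nat.mem_divisors.2 ⟨hg.dvd n, hg.ne_zero⟩

end IsLocallyDetermined

theorem Polynomial.isLocallyDetermined_natAbs_gcd_eval {ι : Type*} [Fintype ι] (P : ι → ℤ[X])
    {N : ℤ} (hN : N ≠ 0) (hC : C N ∈ Ideal.span (Set.range P)) :
    IsLocallyDetermined (fun n => (Finset.univ.gcd fun i => (P i).eval n).natAbs) N.natAbs where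
  ne_zero := Int.natAbs_ne_zero.2 hN
  dvd n := Int.natAbs_dvd_natAbs.2 (by simpa using gcd_eval_dvd_eval_of_mem_span P n hC)
  dvd_of_dvd_sub _ _ _ h hk :=
    Int.natCast_dvd.1 (dvd_gcd_eval_of_dvd_sub P h (Int.natCast_dvd.2 hk))

theorem stmt8_general (s : ℕ) (P : Fin s → Polynomial ℤ)
    (hcop : ∀ D : Polynomial ℚ,
      (∀ i, D ∣ (P i).map (Int.castRingHom ℚ)) → D.natDegree = 0) :
    (Set.range fun n : ℤ => Finset.univ.gcd fun i => (P i).eval n).Finite ∧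
    ∀ n m : ℤ,
      (∃ n' : ℤ,
        gcd (Finset.univ.gcd fun i => (P i).eval n) (Finset.univ.gcd fun i => (P i).eval m)
          = Finset.univ.gcd fun i => (P i).eval n') ∧
      (∃ n'' : ℤ,
        lcm (Finset.univ.gcd fun i => (P i).eval n) (Finset.univ.gcd fun i => (P i).eval m)
          = Finset.univ.gcd fun i => (P i).eval n'') := by
  obtain ⟨N, hN, hC⟩ := exists_C_mem_span_of_span_map_eq_top P
    (span_range_eq_top_of_forall_dvd_natDegree_eq_zero _ hcop)
  have hg := isLocallyDetermined_natAbs_gcd_eval P hN hC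
  have hd (n : ℤ) : (Finset.univ.gcd fun i => (P i).eval n)
      = ((Finset.univ.gcd fun i => (P i).eval n).natAbs : ℤ) := by
    rw [Int.natCast_natAbs, Int.abs_eq_normalize, Finset.normalize_gcd]
  refine ⟨?_, fun n m => ⟨?_, ?_⟩⟩
  · refine (hg.finite_range.image Nat.cast).subset ?_
    rintro _ ⟨n, rfl⟩
    exact ⟨_, ⟨n, rfl⟩, (hd n).symm⟩
  · obtain ⟨n', h⟩ := hg.exists_eq_gcd n m
    refine ⟨n', ?_⟩
    rw [hd n, hd m, hd n', ← Int.coe_gcd, Int.gcd_natCast_natCast]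
    exact congrArg _ h.symm
  · obtain ⟨n'', h⟩ := hg.exists_eq_lcm n m
    refine ⟨n'', ?_⟩
    rw [hd n, hd m, hd n'', ← Int.coe_lcm, Int.lcm_natCast_natCast]
    exact congrArg _ h.symm

/-- For nonzero coprime one-variable polynomials, the set of gcds of values
is finite and stable under gcd and lcm. -/
theorem stmt8 (s : ℕ) (hs : 2 ≤ s)
    (P : Fin s → Polynomial ℤ) (hP : ∀ i, P i ≠ 0)
    (hcop : ∀ D : Polynomial ℚ,
      (∀ i, D ∣ (P i).map (Int.castRingHom ℚ)) → D.natDegree = 0) :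
    (Set.range fun n : ℤ => Finset.univ.gcd fun i => (P i).eval n).Finite ∧
    ∀ n m : ℤ,
      (∃ n' : ℤ,
        gcd (Finset.univ.gcd fun i => (P i).eval n) (Finset.univ.gcd fun i => (P i).eval m)
          = Finset.univ.gcd fun i => (P i).eval n') ∧
      (∃ n'' : ℤ,
        lcm (Finset.univ.gcd fun i => (P i).eval n) (Finset.univ.gcd fun i => (P i).eval m)
          = Finset.univ.gcd fun i => (P i).eval n'') :=
  stmt8_general s P hcop
end

section
/- Let P_1,…,P_s ∈ ℤ[x_1,…,x_r] (s ≥ 2, r ≥ 2) be nonzero coprime polynomials, and suppose P_i(0,…,0) ≠ 0 for at least one i ∈ {1,…,s}. Then the polynomials P_1(t·a),…,P_s(t·a), obtained by substituting x_j := t·a_j, are coprime in ℚ[a_1,…,a_r, t]. Consequently there is a nonzero polynomial G ∈ ℚ[a_1,…,a_r] such that for every a* ∈ ℤ^r with G(a*) ≠ 0, the one-variable polynomials P_1(t·a*),…,P_s(t·a*) are coprime in ℚ[t]. -/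
/-!
Let `D` divide every `P_i(t·a)`. Specialising `t := c` turns `P_i(t·a)` into `P_i(c·a)`: for
`c ≠ 0` rescaling `a` shows that `D(a, c)` divides the coprime `P_i`, and for `c = 0` it divides
the nonzero constant `P_i(0)`. So `D(a, c)` is constant in `a` for every `c ∈ ℚ`, i.e. `D` depends
on `t` alone, and setting `a := 0` shows that `D` divides `P_i(0) ≠ 0`, hence is constant.

For the second part view the `P_i(t·a)` as polynomials in `t` over `R = ℚ[a]`. By Gauss's lemma
their gcd over `Frac R` lifts to a common divisor in `R[t]`, which is constant by the first part,
so they generate the unit ideal of `(Frac R)[t]`. Clearing denominators gives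
`G = ∑ V_i · P_i(t·a)` with `0 ≠ G ∈ R`, and every common divisor of the `P_i(t·a*)` divides the
constant `G(a*)`.
-/

open MvPolynomial

/-- Substitution `x_j ↦ t·a_j`, from `ℤ[x_1,…,x_r]` to `ℚ[a_1,…,a_r,t]`
(the variable `Sum.inl j` is `a_j` and `Sum.inr ()` is `t`). -/
noncomputable def subRay (r : ℕ) :
    MvPolynomial (Fin r) ℤ →+* MvPolynomial (Fin r ⊕ Unit) ℚ :=
  eval₂Hom (Int.castRingHom (MvPolynomial (Fin r ⊕ Unit) ℚ))
    fun j => X (Sum.inr ()) * X (Sum.inl j)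

/-- Substitution `x_j ↦ t·a*_j` for a fixed `a* ∈ ℤ^r`, from `ℤ[x_1,…,x_r]`
to `ℚ[t]`. -/
noncomputable def subRayAt (r : ℕ) (a : Fin r → ℤ) :
    MvPolynomial (Fin r) ℤ →+* Polynomial ℚ :=
  eval₂Hom (Int.castRingHom (Polynomial ℚ))
    fun j => Polynomial.C ((a j : ℚ)) * Polynomial.X

namespace MvPolynomial

lemma totalDegree_eq_zero_of_dvd_C {σ R : Type*} [CommSemiring R] [NoZeroDivisors R]
    {D : MvPolynomial σ R} {c : R} (hc : c ≠ 0) (hD : D ∣ C c) : D.totalDegree = 0 := by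
  obtain ⟨E, hE⟩ := hD
  have hDE : D * E ≠ 0 := hE ▸ C_ne_zero.mpr hc
  have := congrArg totalDegree hE
  rw [totalDegree_C, totalDegree_mul_of_isDomain (left_ne_zero_of_mul hDE)
    (right_ne_zero_of_mul hDE)] at this
  omega

section Substitutions

variable {σ R : Type*} [CommSemiring R]

noncomputable def scale (c : R) : MvPolynomial σ R →ₐ[R] MvPolynomial σ R :=
  aeval fun j => C c * X j

lemma scale_scale (c d : R) (p : MvPolynomial σ R) : scale c (scale d p) = scale (c * d) p := by
  rw [← AlgHom.comp_apply]
  congr 1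
  ext j
  simp [scale, mul_left_comm, mul_assoc]

lemma scale_one (p : MvPolynomial σ R) : scale 1 p = p := by
  simp [scale]

lemma scale_zero (p : MvPolynomial σ R) : scale 0 p = C (constantCoeff p) := by
  have : scale (0 : R) = (aeval 0 : MvPolynomial σ R →ₐ[R] MvPolynomial σ R) := by
    ext j
    simp [scale]
  rw [this, aeval_zero, algebraMap_eq]

noncomputable def ray : MvPolynomial σ R →ₐ[R] MvPolynomial (σ ⊕ Unit) R :=
  aeval fun j => X (Sum.inr ()) * X (Sum.inl j)

noncomputable def slice (c : R) : MvPolynomial (σ ⊕ Unit) R →ₐ[R] MvPolynomial σ R :=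
  aeval (Sum.elim X fun _ => C c)

lemma slice_ray (c : R) (p : MvPolynomial σ R) : slice c (ray p) = scale c p := by
  rw [ray, comp_aeval_apply, scale]
  congr 2
  funext j
  simp [slice]

lemma eval_slice (a : σ → R) (c : R) (p : MvPolynomial (σ ⊕ Unit) R) :
    eval a (slice c p) = eval (Sum.elim a fun _ => c) p := by
  change aeval a (slice c p) = aeval (Sum.elim a fun _ => c) p
  rw [slice, comp_aeval_apply]
  congr 2
  funext v
  cases v <;> simp

end Substitutions

section Field

variable {σ K : Type*} [Field K]

lemma totalDegree_eq_zero_of_forall_dvd_scale {ι : Type*} {P : ι → MvPolynomial σ K}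
    (hcop : ∀ D, (∀ i, D ∣ P i) → D.totalDegree = 0) (h0 : ∃ i, constantCoeff (P i) ≠ 0)
    (c : K) {D : MvPolynomial σ K} (hD : ∀ i, D ∣ scale c (P i)) : D.totalDegree = 0 := by
  rcases eq_or_ne c 0 with rfl | hc
  · obtain ⟨i, hi⟩ := h0
    exact totalDegree_eq_zero_of_dvd_C hi (scale_zero (P i) ▸ hD i)
  · have hback : (scale c⁻¹ D).totalDegree = 0 := hcop _ fun i => by
      simpa [scale_scale, inv_mul_cancel₀ hc, scale_one] using map_dvd (scale c⁻¹) (hD i)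
    have hD' : D = scale c (scale c⁻¹ D) := by rw [scale_scale, mul_inv_cancel₀ hc, scale_one]
    rw [hD', totalDegree_eq_zero_iff_eq_C.mp hback, scale, aeval_C]
    exact totalDegree_C _

theorem totalDegree_eq_zero_of_forall_dvd_ray [Infinite K] {ι : Type*}
    {P : ι → MvPolynomial σ K} (hcop : ∀ D, (∀ i, D ∣ P i) → D.totalDegree = 0)
    (h0 : ∃ i, constantCoeff (P i) ≠ 0) {D : MvPolynomial (σ ⊕ Unit) K}
    (hD : ∀ i, D ∣ ray (P i)) : D.totalDegree = 0 := by
  have hslice : ∀ c, slice c D = C (coeff 0 (slice c D)) := fun c =>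
    totalDegree_eq_zero_iff_eq_C.mp <| totalDegree_eq_zero_of_forall_dvd_scale hcop h0 c
      fun i => slice_ray c (P i) ▸ map_dvd (slice c) (hD i)
  let φ : MvPolynomial (σ ⊕ Unit) K →ₐ[K] MvPolynomial (σ ⊕ Unit) K :=
    aeval (Sum.elim 0 fun u => X (Sum.inr u))
  have hφD : φ D = D := MvPolynomial.funext fun x => by
    calc eval x (φ D) = eval (Sum.elim 0 fun _ => x (Sum.inr ())) D := by
          change aeval x (φ D) = aeval _ D
          rw [comp_aeval_apply]
          congr 2
          funext v
          cases v <;> simp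
      _ = eval 0 (slice (x (Sum.inr ())) D) := (eval_slice _ _ _).symm
      _ = eval (x ∘ Sum.inl) (slice (x (Sum.inr ())) D) := by rw [hslice]; simp
      _ = eval x D := by
          rw [eval_slice]
          congr 2
          funext v
          cases v <;> rfl
  have hφray : ∀ p, φ (ray p) = C (constantCoeff p) := fun p => by
    rw [ray, comp_aeval_apply, ← algebraMap_eq, ← aeval_zero]
    congr 2
    funext j
    simp [φ]
  obtain ⟨i, hi⟩ := h0
  rw [← hφD]
  exact totalDegree_eq_zero_of_dvd_C hi (hφray (P i) ▸ map_dvd φ (hD i))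

end Field

section SumUnit

open scoped Polynomial

variable (σ R : Type*) [CommSemiring R]

noncomputable def sumUnitEquivPolynomial : MvPolynomial (σ ⊕ Unit) R ≃ₐ[R] (MvPolynomial σ R)[X] :=
  (renameEquiv R (Equiv.optionEquivSumPUnit σ).symm).trans (optionEquivLeft R σ)

variable {σ R}

@[simp]
lemma sumUnitEquivPolynomial_C (c : R) :
    sumUnitEquivPolynomial σ R (C c) = Polynomial.C (C c) := by
  simp [sumUnitEquivPolynomial]

@[simp]
lemma sumUnitEquivPolynomial_X_inl (j : σ) :
    sumUnitEquivPolynomial σ R (X (Sum.inl j)) = Polynomial.C (X j) := by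
  simp [sumUnitEquivPolynomial]

@[simp]
lemma sumUnitEquivPolynomial_X_inr :
    sumUnitEquivPolynomial σ R (X (Sum.inr ())) = Polynomial.X := by
  simp [sumUnitEquivPolynomial]

lemma natDegree_eq_zero_of_totalDegree_sumUnitEquivPolynomial_symm {d : (MvPolynomial σ R)[X]}
    (h : ((sumUnitEquivPolynomial σ R).symm d).totalDegree = 0) : d.natDegree = 0 := by
  have hd := congrArg (sumUnitEquivPolynomial σ R) (totalDegree_eq_zero_iff_eq_C.mp h)
  rw [AlgEquiv.apply_symm_apply, sumUnitEquivPolynomial_C] at hd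
  rw [hd, Polynomial.natDegree_C]

end SumUnit

end MvPolynomial

namespace Polynomial

open scoped nonZeroDivisors

variable {R ι : Type*} [CommRing R]

theorem exists_C_mem_of_map_fraction_eq_top [IsDomain R] (K : Type*) [Field K] [Algebra R K]
    [IsFractionRing R K] {I : Ideal R[X]} (hI : I.map (mapRingHom (algebraMap R K)) = ⊤) :
    ∃ c ≠ 0, C c ∈ I := by
  let := Polynomial.algebra R K
  have := Polynomial.isLocalization R⁰ K
  have h1 : (1 : K[X]) ∈ I.map (algebraMap R[X] K[X]) := hI ▸ Submodule.mem_top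
  obtain ⟨⟨⟨q, hq⟩, ⟨_, c, hc, rfl⟩⟩, h⟩ :=
    (IsLocalization.mem_map_algebraMap_iff (R⁰.map C) K[X]).mp h1
  refine ⟨c, nonZeroDivisors.ne_zero hc, ?_⟩
  have hinj : Function.Injective (algebraMap R[X] K[X]) :=
    map_injective _ (IsFractionRing.injective R K)
  rw [one_mul] at h
  exact (hinj h : C c = q) ▸ hq

theorem span_map_fraction_eq_top_of_forall_dvd [IsDomain R] [IsGCDMonoid R] (K : Type*) [Field K]
    [Algebra R K] [IsFractionRing R K] {f : ι → R[X]}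
    (hf : ∀ d, (∀ i, d ∣ f i) → d.natDegree = 0) :
    Ideal.span (Set.range fun i => (f i).map (algebraMap R K)) = ⊤ := by
  let := Classical.arbitrary (NormalizedGCDMonoid R)
  set I := Ideal.span (Set.range fun i => (f i).map (algebraMap R K))
  obtain ⟨g, hIg⟩ : ∃ g, I = Ideal.span {g} :=
    ⟨_, (Ideal.span_singleton_generator I).symm⟩
  have hg : ∀ i, g ∣ (f i).map (algebraMap R K) := fun i =>
    Ideal.mem_span_singleton.mp (hIg ▸ Ideal.subset_span ⟨i, rfl⟩)
  have hg0 : g ≠ 0 := by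
    rintro rfl
    have hf0 : ∀ i, f i = 0 := fun i =>
      map_injective _ (IsFractionRing.injective R K) (by simpa using hg i)
    simpa using hf X fun i => hf0 i ▸ dvd_zero X
  set n := (IsLocalization.integerNormalization R⁰ g).primPart
  have hn : ∀ i, n ∣ f i := by
    obtain ⟨b, hb, hbg⟩ := IsLocalization.integerNormalization_spec R⁰ g
    have hb' : IsUnit (C (algebraMap R K b)) := isUnit_C.mpr <| isUnit_iff_ne_zero.mpr <|
      IsFractionRing.to_map_ne_zero_of_mem_nonZeroDivisors (K := K) hb
    intro i
    refine (isPrimitive_primPart _).dvd_of_fraction_map_dvd_fraction_map (K := K) ?_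
    calc n.map (algebraMap R K) ∣ (IsLocalization.integerNormalization R⁰ g).map (algebraMap R K) :=
          map_dvd _ (primPart_dvd _)
      _ = C (algebraMap R K b) * g := by rw [hbg, Algebra.smul_def, algebraMap_apply]
      _ ∣ (f i).map (algebraMap R K) := hb'.mul_left_dvd.mpr (hg i)
  have hnu : IsUnit n := by
    have hnC : n = C (n.coeff 0) := eq_C_of_natDegree_eq_zero (hf n hn)
    rw [hnC]
    exact isUnit_C.mpr (isPrimitive_primPart _ _ ⟨1, by rw [mul_one, ← hnC]⟩)
  rw [hIg, Ideal.span_singleton_eq_top]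
  exact isUnit_or_eq_zero_of_isUnit_integerNormalization_primPart hg0 hnu

theorem exists_C_mem_span_of_forall_dvd [IsDomain R] [IsGCDMonoid R] {f : ι → R[X]}
    (hf : ∀ d, (∀ i, d ∣ f i) → d.natDegree = 0) : ∃ c ≠ 0, C c ∈ Ideal.span (Set.range f) := by
  apply exists_C_mem_of_map_fraction_eq_top (FractionRing R)
  rw [Ideal.map_span, ← Set.range_comp]
  exact span_map_fraction_eq_top_of_forall_dvd (FractionRing R) hf

theorem natDegree_eq_zero_of_forall_dvd_map_of_C_mem_span {S : Type*} [CommRing S] [IsDomain S]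
    (φ : R →+* S) {f : ι → R[X]} {c : R} (hc : φ c ≠ 0) (hmem : C c ∈ Ideal.span (Set.range f))
    {D : S[X]} (hD : ∀ i, D ∣ (f i).map φ) : D.natDegree = 0 := by
  have hspan : Ideal.span (Set.range f) ≤ (Ideal.span {D}).comap (mapRingHom φ) :=
    Ideal.span_le.mpr <| Set.range_subset_iff.mpr fun i => Ideal.mem_span_singleton.mpr (hD i)
  have hDc : D ∣ C (φ c) := by
    simpa using Ideal.mem_span_singleton.mp (hspan hmem)
  simpa using natDegree_le_of_dvd hDc (C_ne_zero.mpr hc)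

end Polynomial

lemma subRay_apply (r : ℕ) (p : MvPolynomial (Fin r) ℤ) :
    subRay r p = ray (p.map (Int.castRingHom ℚ)) := by
  suffices subRay r = (ray : MvPolynomial (Fin r) ℚ →ₐ[ℚ] _).toRingHom.comp
      (map (Int.castRingHom ℚ)) from RingHom.congr_fun this p
  apply ringHom_ext <;> intro <;> simp [subRay, ray]

lemma subRayAt_apply (r : ℕ) (a : Fin r → ℤ) (p : MvPolynomial (Fin r) ℤ) :
    subRayAt r a p =
      (sumUnitEquivPolynomial (Fin r) ℚ (subRay r p)).map (eval fun j => (a j : ℚ)) := by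
  suffices subRayAt r a = (Polynomial.mapRingHom (eval fun j => (a j : ℚ))).comp
      ((sumUnitEquivPolynomial (Fin r) ℚ).toRingHom.comp (subRay r)) from RingHom.congr_fun this p
  apply ringHom_ext
  · intro n
    simp [subRay, subRayAt]
  · intro j
    simp [subRay, subRayAt]

theorem stmt15_general (s r : ℕ)
    (P : Fin s → MvPolynomial (Fin r) ℤ)
    (hcop : ∀ D : MvPolynomial (Fin r) ℚ,
      (∀ i, D ∣ (P i).map (Int.castRingHom ℚ)) → D.totalDegree = 0)
    (h0 : ∃ i, eval (fun _ => (0 : ℤ)) (P i) ≠ 0) :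
    (∀ D : MvPolynomial (Fin r ⊕ Unit) ℚ,
      (∀ i, D ∣ subRay r (P i)) → D.totalDegree = 0) ∧
    ∃ G : MvPolynomial (Fin r) ℚ, G ≠ 0 ∧
      ∀ a : Fin r → ℤ, eval (fun j => (a j : ℚ)) G ≠ 0 →
        ∀ D : Polynomial ℚ, (∀ i, D ∣ subRayAt r a (P i)) → D.natDegree = 0 := by
  have h0ℚ : ∃ i, constantCoeff ((P i).map (Int.castRingHom ℚ)) ≠ 0 := by
    obtain ⟨i, hi⟩ := h0
    exact ⟨i, by simpa [constantCoeff_map, ← eval_zero] using hi⟩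
  have hray : ∀ D, (∀ i, D ∣ subRay r (P i)) → D.totalDegree = 0 := fun D hD =>
    totalDegree_eq_zero_of_forall_dvd_ray hcop h0ℚ fun i => subRay_apply r (P i) ▸ hD i
  refine ⟨hray, ?_⟩
  obtain ⟨G, hG, hmem⟩ := Polynomial.exists_C_mem_span_of_forall_dvd
    (f := fun i => sumUnitEquivPolynomial (Fin r) ℚ (subRay r (P i))) fun d hd =>
      natDegree_eq_zero_of_totalDegree_sumUnitEquivPolynomial_symm <| hray _ fun i => by
        simpa using map_dvd (sumUnitEquivPolynomial (Fin r) ℚ).symm (hd i)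
  exact ⟨G, hG, fun a ha D hD => Polynomial.natDegree_eq_zero_of_forall_dvd_map_of_C_mem_span _
    ha hmem fun i => subRayAt_apply r a (P i) ▸ hD i⟩

/-- If `P_1,…,P_s ∈ ℤ[x_1,…,x_r]` (`r ≥ 2`) are nonzero coprime polynomials not
all vanishing at `0`, then the `P_i(t·a)` are coprime in `ℚ[a,t]`; consequently,
off a proper Zariski-closed subset of directions `a*`, the one-variable
polynomials `P_i(t·a*)` are coprime in `ℚ[t]`. -/
theorem stmt15 (s r : ℕ) (hs : 2 ≤ s) (hr : 2 ≤ r)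
    (P : Fin s → MvPolynomial (Fin r) ℤ)
    (hP : ∀ i, P i ≠ 0)
    (hcop : ∀ D : MvPolynomial (Fin r) ℚ,
      (∀ i, D ∣ (P i).map (Int.castRingHom ℚ)) → D.totalDegree = 0)
    (h0 : ∃ i, eval (fun _ => (0 : ℤ)) (P i) ≠ 0) :
    (∀ D : MvPolynomial (Fin r ⊕ Unit) ℚ,
      (∀ i, D ∣ subRay r (P i)) → D.totalDegree = 0) ∧
    ∃ G : MvPolynomial (Fin r) ℚ, G ≠ 0 ∧
      ∀ a : Fin r → ℤ, eval (fun j => (a j : ℚ)) G ≠ 0 →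
        ∀ D : Polynomial ℚ, (∀ i, D ∣ subRayAt r a (P i)) → D.natDegree = 0 :=
  stmt15_general s r P hcop h0
end
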